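/- arXiv:1407.3941 — 5 statements merged into one kernel-verified Lean document; each statement's English description precedes it below -/
import Mathlib

section
/- Let $p$ be a prime, $V$ an abelian group, and $(K_n)_{n \in \mathbb{N}}$ a decreasing sequence of $\mathbb{F}_p$-subspaces of the $\mathbb{F}_p$-vector space $W = \mathrm{Hom}_{\mathbb{Z}}(\mathbb{Z}/p, V)$. If every linear form $W \to \mathbb{F}_p$ vanishes on $K_n$ for some $n$ (depending on the form), then $K_n = 0$ for some $n$. -/
/-!
If some `K N` is finite-dimensional, the chain stabilises at a nonzero subspace contained in every
`K n`, and a linear form that does not vanish at one of its nonzero vectors vanishes on no `K n`.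
Otherwise every `K n` is infinite-dimensional, so one can choose `x n ∈ K n` outside the span of
`x 0, …, x (n - 1)`; these vectors are linearly independent, and a linear form equal to `1` on all
of them again vanishes on no `K n`.
-/

section DivisionRing

variable {k V : Type*} [DivisionRing k] [AddCommGroup V] [Module k V]

theorem exists_forall_le_of_antitone_of_finiteDimensional {K : ℕ → Submodule k V}
    (hK : Antitone K) (N : ℕ) [FiniteDimensional k (K N)] : ∃ M, ∀ n, K M ≤ K n := by
  have hfin : ∀ n, N ≤ n → FiniteDimensional k (K n) := fun n hn =>
    Submodule.finiteDimensional_of_le (hK hn)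
  obtain ⟨M, hM⟩ := WellFoundedLT.antitone_chain_condition
    (f := fun n => Module.finrank k (K (N + n))) fun m n hmn => by
      have := hfin (N + m) (Nat.le_add_right N m)
      exact Submodule.finrank_mono (hK (Nat.add_le_add_left hmn N))
  refine ⟨N + M, fun n => ?_⟩
  rcases le_total n (N + M) with hn | hn
  · exact hK hn
  · have := hfin (N + M) (Nat.le_add_right N M)
    obtain ⟨d, rfl⟩ := Nat.exists_eq_add_of_le hn
    refine (Submodule.eq_of_le_of_finrank_eq (hK hn) ?_).ge
    rw [Nat.add_assoc]
    exact (hM (M + d) (Nat.le_add_right M d)).symm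

theorem exists_linearIndepOn_forall_exists_mem {K : ℕ → Submodule k V}
    (hK : ∀ n, ¬ FiniteDimensional k (K n)) :
    ∃ s : Set V, LinearIndepOn k id s ∧ ∀ n, ∃ x ∈ s, x ∈ K n := by
  classical
  have hout : ∀ n (t : Finset V), ∃ y ∈ K n, y ∉ Submodule.span k (t : Set V) := fun n t => by
    by_contra! hle
    exact hK n (Submodule.finiteDimensional_of_le hle)
  choose pick pick_mem pick_notMem using hout
  obtain ⟨F, hF_zero, hF_succ⟩ : ∃ F : ℕ → Finset V,
      F 0 = ∅ ∧ ∀ n, F (n + 1) = insert (pick n (F n)) (F n) :=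
    ⟨fun n => Nat.rec ∅ (fun m t => insert (pick m t) t) n, rfl, fun _ => rfl⟩
  have hF : Monotone fun n => (F n : Set V) := by
    refine monotone_nat_of_le_succ fun n => ?_
    rw [hF_succ]
    exact Finset.coe_subset.2 (Finset.subset_insert _ _)
  have hli : ∀ n, LinearIndepOn k id (F n : Set V) := by
    intro n
    induction n with
    | zero =>
      rw [hF_zero, Finset.coe_empty]
      exact linearIndepOn_empty k id
    | succ n ih =>
      rw [hF_succ, Finset.coe_insert]
      exact ih.insert (by simpa using pick_notMem n (F n))
  refine ⟨⋃ n, F n, linearIndepOn_iUnion_of_directed hF.directed_le hli, fun n =>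
    ⟨pick n (F n), Set.mem_iUnion.2 ⟨n + 1, by simp [hF_succ]⟩, pick_mem n _⟩⟩

end DivisionRing

section Field

variable {k V : Type*} [Field k] [AddCommGroup V] [Module k V]

theorem LinearIndepOn.exists_dual_eq_one {s : Set V} (hs : LinearIndepOn k id s) :
    ∃ f : Module.Dual k V, ∀ x ∈ s, f x = 1 := by
  let b := Module.Basis.extend hs
  refine ⟨b.constr k fun _ => 1, fun x hx => ?_⟩
  have hbx : b ⟨x, hs.subset_extend _ hx⟩ = x := Module.Basis.extend_apply_self hs _
  rw [← hbx, Module.Basis.constr_basis]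

theorem exists_eq_bot_of_antitone_of_forall_dual {K : ℕ → Submodule k V} (hK : Antitone K)
    (h : ∀ f : Module.Dual k V, ∃ n, K n ≤ LinearMap.ker f) : ∃ n, K n = ⊥ := by
  by_contra! hne
  by_cases hfin : ∃ N, FiniteDimensional k (K N)
  · obtain ⟨N, hN⟩ := hfin
    obtain ⟨M, hM⟩ := exists_forall_le_of_antitone_of_finiteDimensional hK N
    obtain ⟨x, hxM, hx0⟩ := Submodule.exists_mem_ne_zero_of_ne_bot (hne M)
    obtain ⟨f, hfx⟩ : ∃ f : Module.Dual k V, f x ≠ 0 := by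
      by_contra! hf
      exact hx0 ((Module.forall_dual_apply_eq_zero_iff k x).1 hf)
    obtain ⟨n, hn⟩ := h f
    exact hfx (hn (hM n hxM))
  · push Not at hfin
    obtain ⟨s, hs, hsK⟩ := exists_linearIndepOn_forall_exists_mem hfin
    obtain ⟨f, hf⟩ := hs.exists_dual_eq_one
    obtain ⟨n, hn⟩ := h f
    obtain ⟨x, hxs, hxK⟩ := hsK n
    exact one_ne_zero ((hf x hxs).symm.trans (hn hxK))

end Field

/-- If every linear form on an `𝔽p`-vector space `W` vanishes on some term of a
decreasing chain `(K n)` of subspaces, then the chain reaches `0`. -/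
theorem stmt2 (p : ℕ) [Fact p.Prime] (W : Type*) [AddCommGroup W] [Module (ZMod p) W]
    (K : ℕ → Submodule (ZMod p) W) (hdec : ∀ m n : ℕ, m ≤ n → K n ≤ K m)
    (h : ∀ lam : W →ₗ[ZMod p] ZMod p, ∃ n, ∀ x ∈ K n, lam x = 0) :
    ∃ n, K n = ⊥ :=
  exists_eq_bot_of_antitone_of_forall_dual (fun _ _ hmn => hdec _ _ hmn) h
end

section
/- Let $p$ be a prime and $U$ a finite abelian $p$-group generated by $r$ elements of order dividing $p^t$. Then every function $f : U \to \mathbb{F}_p$ is a polynomial function of degree at most $(p^t - 1)\cdot r$; in particular the inclusion $\mathrm{Pol}(U, \mathbb{F}_p) \subseteq \mathrm{Fct}(U, \mathbb{F}_p)$ is an equality. -/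
/-- A function `f : V → W` between abelian groups is polynomial of degree at most `d` if its
`(d+1)`-st cross effect vanishes. -/
def IsPolynomialDeg {V W : Type*} [AddCommGroup V] [AddCommGroup W] (d : ℕ) (f : V → W) : Prop :=
  ∀ v : Fin (d + 1) → V,
    ∑ S : Finset (Fin (d + 1)), (-1 : ℤ) ^ S.card • f (∑ i ∈ S, v i) = 0

lemma aux_sup_pow_le {R : Type*} [CommRing R] (I J : Ideal R) (n m : ℕ) :
    (I ⊔ J) ^ (n + m) ≤ I ^ (n + 1) ⊔ J ^ m := by
  rw [← Ideal.add_eq_sup, ← Ideal.add_eq_sup, add_pow, Ideal.sum_eq_sup]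
  apply Finset.sup_le
  intro i hi
  by_cases hn : n + 1 ≤ i
  · exact Ideal.mul_le_left.trans (Ideal.mul_le_left.trans
      ((Ideal.pow_le_pow_right hn).trans le_sup_left))
  · refine Ideal.mul_le_left.trans (Ideal.mul_le_right.trans
      ((Ideal.pow_le_pow_right ?_).trans le_sup_right))
    simp only [Finset.mem_range] at hi
    omega

lemma aux_span_nilpotent {R : Type*} [CommRing R] {ι : Type*} (y : ι → R) (e : ℕ)
    (h : ∀ i, y i ^ (e + 1) = 0) (s : Finset ι) :
    Ideal.span (y '' s) ^ (e * s.card + 1) = ⊥ := by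
  classical
  induction s using Finset.induction_on with
  | empty => simp
  | @insert a s ha ih =>
      rw [Finset.coe_insert, Set.image_insert_eq, Ideal.span_insert]
      have hcard : e * (insert a s).card + 1 = e + (e * s.card + 1) := by
        rw [Finset.card_insert_of_notMem ha]; ring
      rw [hcard]
      refine le_bot_iff.mp ((aux_sup_pow_le _ _ _ _).trans ?_)
      have h1 : Ideal.span {y a} ^ (e + 1) = ⊥ := by
        rw [Ideal.span_singleton_pow, h a, Ideal.span_singleton_eq_bot]
      rw [h1, ih, bot_sup_eq]

lemma aux_prod_mem_pow {R : Type*} [CommRing R] (J : Ideal R) :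
    ∀ (n : ℕ) (z : Fin n → R), (∀ i, z i ∈ J) → ∏ i, z i ∈ J ^ n := by
  intro n
  induction n with
  | zero => intro z _; simp [Ideal.one_eq_top]
  | succ n ih =>
      intro z hz
      rw [Fin.prod_univ_succ, pow_succ, mul_comm (J ^ n) J]
      exact Ideal.mul_mem_mul (hz 0) (ih _ fun i => hz i.succ)

theorem aux_stmt7 (p t r : ℕ) [Fact p.Prime] (U : Type*) [AddCommGroup U] [Fintype U]
    (hpgroup : ∀ u : U, ∃ n : ℕ, p ^ n • u = 0)
    (g : Fin r → U) (hgen : AddSubgroup.closure (Set.range g) = ⊤)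
    (hord : ∀ i, p ^ t • g i = 0) :
    ∀ f : U → ZMod p,
      ∀ v : Fin ((p ^ t - 1) * r + 1) → U,
        ∑ S : Finset (Fin ((p ^ t - 1) * r + 1)), (-1 : ℤ) ^ S.card • f (∑ i ∈ S, v i) = 0 := by
  classical
  intro f
  set n := (p ^ t - 1) * r + 1 with hn
  intro v
  set A := AddMonoidAlgebra (ZMod p) U with hA
  haveI : CharP A p := charP_of_injective_algebraMap' (ZMod p) p
  have hpt : 0 < p ^ t := pow_pos (Fact.out (p := p.Prime)).pos t
  set y : U → A := fun u => AddMonoidAlgebra.single u 1 - 1 with hy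
  set J : Ideal A := Ideal.span (Set.range fun i => y (g i)) with hJdef
  -- nilpotency of generators
  have hnil : ∀ i, y (g i) ^ (p ^ t - 1 + 1) = 0 := by
    intro i
    rw [Nat.sub_add_cancel hpt]
    show (AddMonoidAlgebra.single (g i) 1 - 1) ^ p ^ t = 0
    rw [sub_pow_char_pow, one_pow, AddMonoidAlgebra.single_pow, one_pow, hord i,
      ← AddMonoidAlgebra.one_def, sub_self]
  -- every y u lies in J
  have hmem : ∀ u : U, y u ∈ J := by
    intro u
    have hu : u ∈ AddSubgroup.closure (Set.range g) := by rw [hgen]; trivial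
    induction hu using AddSubgroup.closure_induction with
    | mem x hx => obtain ⟨i, rfl⟩ := hx; exact Ideal.subset_span ⟨i, rfl⟩
    | zero =>
        have h0 : y (0 : U) = 0 := by
          simp only [hy]; rw [← AddMonoidAlgebra.one_def, sub_self]
        rw [h0]; exact zero_mem J
    | add x z hx hz ihx ihz =>
        have hs : AddMonoidAlgebra.single (x + z) (1 : ZMod p) =
            AddMonoidAlgebra.single x 1 * AddMonoidAlgebra.single z 1 := by
          rw [AddMonoidAlgebra.single_mul_single, one_mul]
        have key : y (x + z) = y x * y z + y x + y z := by
          simp only [hy]; rw [hs]; ring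
        rw [key]
        exact add_mem (add_mem (Ideal.mul_mem_right _ _ ihx) ihx) ihz
    | neg x hx ihx =>
        have hs : AddMonoidAlgebra.single x (1 : ZMod p) *
            AddMonoidAlgebra.single (-x) 1 = 1 := by
          rw [AddMonoidAlgebra.single_mul_single, one_mul, add_neg_cancel,
            ← AddMonoidAlgebra.one_def]
        have key : y (-x) = y x * (-(AddMonoidAlgebra.single (-x) 1)) := by
          simp only [hy]; rw [mul_neg, sub_mul, hs, one_mul, neg_sub]
        rw [key]
        exact Ideal.mul_mem_right _ _ ihx
  -- J ^ n = ⊥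
  have hJ : J ^ n = ⊥ := by
    have h := aux_span_nilpotent (fun i => y (g i)) (p ^ t - 1) hnil Finset.univ
    simpa [Set.image_univ, Finset.card_univ, hn] using h
  -- the product vanishes
  have hP : ∏ i : Fin n, y (v i) = 0 := by
    have h1 := aux_prod_mem_pow J n (fun i => y (v i)) (fun i => hmem (v i))
    rw [hJ] at h1
    simpa using h1
  -- expansion of the product
  have hexp : ∏ i : Fin n, y (v i)
      = ∑ S ∈ (Finset.univ : Finset (Fin n)).powerset,
          AddMonoidAlgebra.single (∑ i ∈ S, v i) (1 : ZMod p) * (-1 : A) ^ (n - S.card) := by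
    have h := Finset.prod_add (fun i : Fin n => AddMonoidAlgebra.single (v i) (1 : ZMod p))
      (fun _ : Fin n => (-1 : A)) Finset.univ
    simp only [hy, sub_eq_add_neg] at h ⊢
    rw [h]
    refine Finset.sum_congr rfl fun S hS => ?_
    rw [AddMonoidAlgebra.prod_single, Finset.prod_const_one, Finset.prod_const,
      Finset.card_sdiff_of_subset (Finset.subset_univ S), Finset.card_univ, Fintype.card_fin]
  -- apply the linear functional
  set φ : A →ₗ[ZMod p] ZMod p := Finsupp.linearCombination (ZMod p) f ∘ₗ
    (AddMonoidAlgebra.coeffLinearEquiv (ZMod p)).toLinearMap with hφ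
  have hsingle : ∀ (u : U) (c : ZMod p), φ (AddMonoidAlgebra.single u c) = c * f u := by
    intro u c
    show Finsupp.linearCombination (ZMod p) f (Finsupp.single u c) = c * f u
    rw [Finsupp.linearCombination_single, smul_eq_mul]
  have hterm : ∀ S : Finset (Fin n),
      φ (AddMonoidAlgebra.single (∑ i ∈ S, v i) (1 : ZMod p) * (-1 : A) ^ (n - S.card))
        = (-1 : ℤ) ^ (n - S.card) • f (∑ i ∈ S, v i) := by
    intro S
    have hcast : ((-1 : A) ^ (n - S.card)) = (((-1 : ℤ) ^ (n - S.card) : ℤ) : A) := by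
      push_cast; ring
    rw [hcast, mul_comm, ← zsmul_eq_mul, map_zsmul, hsingle, one_mul]
  have hzero : ∑ S ∈ (Finset.univ : Finset (Fin n)).powerset,
      (-1 : ℤ) ^ (n - S.card) • f (∑ i ∈ S, v i) = 0 := by
    have h2 : φ ((∏ i : Fin n, y (v i) : AddMonoidAlgebra (ZMod p) U)) = 0 := by
      rw [hP, map_zero]
    rw [hexp, map_sum] at h2
    rw [← h2]
    exact Finset.sum_congr rfl fun S _ => (hterm S).symm
  rw [Finset.powerset_univ] at hzero
  have hfinal : ∀ S : Finset (Fin n),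
      (-1 : ℤ) ^ S.card • f (∑ i ∈ S, v i)
        = (-1 : ℤ) ^ n • ((-1 : ℤ) ^ (n - S.card) • f (∑ i ∈ S, v i)) := by
    intro S
    rw [smul_smul, ← pow_add]
    have hS : S.card ≤ n := by
      simpa [Finset.card_univ] using Finset.card_le_univ S
    have he : n + (n - S.card) = S.card + 2 * (n - S.card) := by omega
    rw [he, pow_add, pow_mul, neg_one_sq, one_pow, mul_one]
  calc ∑ S : Finset (Fin n), (-1 : ℤ) ^ S.card • f (∑ i ∈ S, v i)
      = (-1 : ℤ) ^ n • ∑ S : Finset (Fin n), (-1 : ℤ) ^ (n - S.card) • f (∑ i ∈ S, v i) := by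
        rw [Finset.smul_sum]; exact Finset.sum_congr rfl fun S _ => hfinal S
    _ = 0 := by rw [hzero, smul_zero]

/-- if `U` is a finite abelian `p`-group generated by `r` elements of order
dividing `p^t`, then every function `U → 𝔽p` is polynomial of degree at most `(p^t - 1) * r`. -/
theorem stmt7 (p t r : ℕ) [Fact p.Prime] (U : Type*) [AddCommGroup U] [Fintype U]
    (hpgroup : ∀ u : U, ∃ n : ℕ, p ^ n • u = 0)
    (g : Fin r → U) (hgen : AddSubgroup.closure (Set.range g) = ⊤)
    (hord : ∀ i, p ^ t • g i = 0) :
    ∀ f : U → ZMod p, IsPolynomialDeg ((p ^ t - 1) * r) f := by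
  intro f
  exact aux_stmt7 p t r U hpgroup g hgen hord f
end

section
/- Let $V$ be an abelian group all of whose elements are torsion of order prime to $p$ (i.e. $V$ is torsion with no $p$-torsion). Then every polynomial function $f : V \to \mathbb{F}_p$ is constant. -/
lemma sum_finset_map {n : ℕ} {W : Type*} [AddCommGroup W]
    (F : Finset (Fin (n + 1)) → W) :
    ∑ t ∈ ((Finset.univ : Finset (Fin n)).map Fin.castSuccEmb).powerset, F t
      = ∑ t : Finset (Fin n), F (t.map Fin.castSuccEmb) := by
  rw [← Finset.powerset_univ]
  refine Finset.sum_nbij' (fun t => t.preimage Fin.castSuccEmb Fin.castSuccEmb.injective.injOn)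
    (fun t => t.map Fin.castSuccEmb) ?_ ?_ ?_ ?_ ?_
  · intro a _; simp
  · intro a ha
    simp only [Finset.mem_powerset] at ha ⊢
    exact Finset.map_subset_map.mpr (Finset.subset_univ _)
  · intro a ha
    obtain ⟨u, _, rfl⟩ := Finset.subset_map_iff.mp (Finset.mem_powerset.mp ha)
    ext i; simp [Fin.castSucc, Fin.castAdd]
  · intro a _; ext i; simp [Fin.castSucc, Fin.castAdd]
  · intro a ha
    obtain ⟨u, _, rfl⟩ := Finset.subset_map_iff.mp (Finset.mem_powerset.mp ha)
    congr 1
    ext i; simp [Fin.castSucc, Fin.castAdd]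

lemma diff_poly {V : Type*} [AddCommGroup V] {W : Type*} [AddCommGroup W] {d : ℕ}
    {f : V → W} (hf : IsPolynomialDeg (d + 1) f) (h : V) :
    IsPolynomialDeg d (fun x => f x - f (x + h)) := by
  intro w
  have key := hf (Fin.snoc w h)
  have hlast : Fin.last (d + 1) ∉ (Finset.univ : Finset (Fin (d + 1))).map Fin.castSuccEmb := by
    simp only [Finset.mem_map, Finset.mem_univ, true_and, not_exists, Fin.coe_castSuccEmb]
    exact fun i => Fin.ne_of_lt (Fin.castSucc_lt_last i)
  rw [← Finset.powerset_univ, Fin.univ_castSuccEmb, Finset.cons_eq_insert,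
    Finset.sum_powerset_insert hlast] at key
  rw [sum_finset_map, sum_finset_map] at key
  have e1 : ∀ t : Finset (Fin (d + 1)),
      (-1 : ℤ) ^ (t.map Fin.castSuccEmb).card • f (∑ i ∈ t.map Fin.castSuccEmb, (Fin.snoc w h : Fin (d + 2) → V) i)
        = (-1 : ℤ) ^ t.card • f (∑ i ∈ t, w i) := by
    intro t
    rw [Finset.card_map, Finset.sum_map]
    congr 2
    exact Finset.sum_congr rfl fun i _ => Fin.snoc_castSucc ..
  have e2 : ∀ t : Finset (Fin (d + 1)),
      (-1 : ℤ) ^ (insert (Fin.last (d + 1)) (t.map Fin.castSuccEmb)).card •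
          f (∑ i ∈ insert (Fin.last (d + 1)) (t.map Fin.castSuccEmb), (Fin.snoc w h : Fin (d + 2) → V) i)
        = -((-1 : ℤ) ^ t.card • f ((∑ i ∈ t, w i) + h)) := by
    intro t
    have hnot : Fin.last (d + 1) ∉ t.map Fin.castSuccEmb := by
      simp only [Finset.mem_map, not_exists, not_and, Fin.coe_castSuccEmb]
      exact fun i _ => Fin.ne_of_lt (Fin.castSucc_lt_last i)
    rw [Finset.card_insert_of_notMem hnot, Finset.sum_insert hnot, Finset.card_map,
      Finset.sum_map]
    have hs : (∑ i ∈ t, (Fin.snoc w h : Fin (d + 2) → V) (Fin.castSuccEmb i)) = ∑ i ∈ t, w i :=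
      Finset.sum_congr rfl fun i _ => Fin.snoc_castSucc ..
    rw [Fin.snoc_last, hs, pow_succ, add_comm h]
    simp [neg_smul, mul_smul]
  simp only [e1, e2] at key
  simp only [smul_sub, Finset.sum_sub_distrib]
  rw [Finset.sum_neg_distrib] at key
  simpa [sub_eq_add_neg] using key

lemma poly_const (p : ℕ) [Fact p.Prime] (V : Type*) [AddCommGroup V]
    (htor : ∀ v : V, ∃ n : ℕ, 0 < n ∧ ¬ (p ∣ n) ∧ n • v = 0) :
    ∀ (d : ℕ) (f : V → ZMod p), IsPolynomialDeg d f → ∀ u v : V, f u = f v := by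
  intro d
  induction d with
  | zero =>
    intro f hf u v
    have huniv : (Finset.univ : Finset (Finset (Fin 1))) = {∅, {0}} := by decide
    have hu := hf (fun _ => u)
    have hv := hf (fun _ => v)
    rw [huniv, Finset.sum_pair (by decide)] at hu hv
    simp at hu hv
    linear_combination hv - hu
  | succ d ih =>
    intro f hf u v
    have hΔ : ∀ h x y : V, f x - f (x + h) = f y - f (y + h) := fun h x y =>
      ih _ (diff_poly hf h) x y
    set c : V → ZMod p := fun h => f 0 - f h with hc_def
    have hadd : ∀ h k : V, c (h + k) = c h + c k := by
      intro h k
      have h1 := hΔ k h 0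
      simp only [hc_def, zero_add] at h1 ⊢
      linear_combination h1
    have hzero : c 0 = 0 := by simp [hc_def]
    have hsmul : ∀ (n : ℕ) (x : V), c (n • x) = n • c x := by
      intro n x
      induction n with
      | zero => simpa using hzero
      | succ m ihm => rw [succ_nsmul, succ_nsmul, hadd, ihm]
    have hcz : ∀ x : V, c x = 0 := by
      intro x
      obtain ⟨n, hn0, hnp, hnx⟩ := htor x
      have h1 : (n : ZMod p) * c x = 0 := by
        rw [← nsmul_eq_mul, ← hsmul, hnx, hzero]
      have h2 : (n : ZMod p) ≠ 0 := by
        rwa [Ne, ZMod.natCast_eq_zero_iff]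
      exact (mul_eq_zero.mp h1).resolve_left h2
    have hf0 : ∀ x : V, f x = f 0 := by
      intro x
      have := hcz x
      simp only [hc_def] at this
      linear_combination -this
    rw [hf0 u, hf0 v]

/-- if every element of `V` is torsion of order prime to `p`, then every polynomial
function `V → 𝔽p` is constant. -/
theorem stmt8 (p : ℕ) [Fact p.Prime] (V : Type*) [AddCommGroup V]
    (htor : ∀ v : V, ∃ n : ℕ, 0 < n ∧ ¬ (p ∣ n) ∧ n • v = 0)
    (f : V → ZMod p) (hf : ∃ d, IsPolynomialDeg d f) :
    ∀ u v : V, f u = f v := by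
  obtain ⟨d, hd⟩ := hf
  exact poly_const p V htor d f hd
end

section
/- Let $V$ be an abelian group. The graded algebra associated to the filtration of the rational group algebra $\mathbb{Q}[V]$ by powers of its augmentation ideal is naturally isomorphic to the symmetric algebra over $\mathbb{Q}$ on the vector space $\mathbb{Q} \otimes V$. -/
noncomputable section

variable (V : Type) [AddCommGroup V]

/-- The augmentation of the rational group algebra `ℚ[V]`. -/
def aug : AddMonoidAlgebra ℚ V →ₐ[ℚ] ℚ :=
  AddMonoidAlgebra.lift ℚ ℚ V 1

/-- The augmentation ideal `I` of `ℚ[V]`. -/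
def augI : Ideal (AddMonoidAlgebra ℚ V) := RingHom.ker (aug V)

/-- The graded algebra `⨁ I^d/I^{d+1}` associated to the filtration of `ℚ[V]` by the powers of
the augmentation ideal, realized as the quotient of the Rees algebra `⨁ I^d` by the ideal
generated by `I` placed in degree `0`. -/
def GrAlg :=
  ↥(reesAlgebra (augI V)) ⧸
    (Ideal.span ((algebraMap (AddMonoidAlgebra ℚ V) ↥(reesAlgebra (augI V))) ''
      (augI V : Set (AddMonoidAlgebra ℚ V))))

instance : CommRing (GrAlg V) := by unfold GrAlg; infer_instance
instance : Algebra ℚ (GrAlg V) := by unfold GrAlg; infer_instance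

/-- The `ℚ`-vector space `ℚ ⊗ V`. -/
abbrev MQ := TensorProduct ℤ ℚ V

/-- The commutativity relations presenting the symmetric algebra on `ℚ ⊗ V` as a quotient of
the tensor algebra. -/
inductive symRel : TensorAlgebra ℚ (MQ V) → TensorAlgebra ℚ (MQ V) → Prop
  | comm (x y : MQ V) :
      symRel (TensorAlgebra.ι ℚ x * TensorAlgebra.ι ℚ y)
        (TensorAlgebra.ι ℚ y * TensorAlgebra.ι ℚ x)

/-!
The classes of `([v] - 1) t` in degree one are additive in `v`, because
`[v + w] - 1 - ([v] - 1) - ([w] - 1) = ([v] - 1) ([w] - 1) ∈ I²`; so they define an algebra map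
`Sym (ℚ ⊗ V) → gr`, onto because `I` is spanned by the `[v] - 1`.
Conversely `[v] ↦ exp (v X)` is an algebra map `E : ℚ[V] → Sym (ℚ ⊗ V)⟦X⟧` sending `Iⁿ` into
`(Xⁿ)`, so `∑ pₙ tⁿ ↦ ∑ coeff n (E pₙ)` is multiplicative on the Rees algebra. It kills `I` in
degree zero, hence descends to `gr`, and there it is left inverse to the first map.
-/

section Rees

variable {A A' : Type*} [CommRing A] [CommRing A'] {I : Ideal A} {I' : Ideal A'}

def reesAlgebra.map (f : A →+* A') (h : I.map f ≤ I') : reesAlgebra I →+* reesAlgebra I' :=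
  ((Polynomial.mapRingHom f).comp (reesAlgebra I).val.toRingHom).codRestrict (reesAlgebra I')
    fun p i => by
      rw [RingHom.comp_apply, Polynomial.coe_mapRingHom, Polynomial.coeff_map]
      exact Ideal.pow_right_mono h i (Ideal.map_pow f I i ▸ Ideal.mem_map_of_mem f (p.2 i))

@[simp]
theorem reesAlgebra.coe_map (f : A →+* A') (h : I.map f ≤ I') (p : reesAlgebra I) :
    (reesAlgebra.map f h p : Polynomial A') = (p : Polynomial A).map f :=
  rfl

end Rees

namespace PowerSeries

variable {B : Type*} [CommRing B]

def diagonal (q : Polynomial B⟦X⟧) : Polynomial B :=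
  .ofFinsupp <| .ofCoeff <| Finsupp.onFinset q.support (fun i => coeff i (q.coeff i)) fun i h => by
    contrapose! h
    rw [Polynomial.notMem_support_iff.1 h, map_zero]

@[simp]
theorem coeff_diagonal (q : Polynomial B⟦X⟧) (i : ℕ) :
    (diagonal q).coeff i = coeff i (q.coeff i) := by
  rw [diagonal, Polynomial.coeff_ofFinsupp, AddMonoidAlgebra.coeff_ofCoeff, Finsupp.onFinset_apply]

theorem diagonal_monomial (n : ℕ) (a : B⟦X⟧) :
    diagonal (Polynomial.monomial n a) = Polynomial.monomial n (coeff n a) := by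
  ext i
  simp only [coeff_diagonal, Polynomial.coeff_monomial]
  split_ifs <;> simp_all

theorem coeff_add_mul_of_X_pow_dvd {i j : ℕ} {a b : B⟦X⟧} (ha : X ^ i ∣ a) (hb : X ^ j ∣ b) :
    coeff (i + j) (a * b) = coeff i a * coeff j b := by
  obtain ⟨a, rfl⟩ := ha
  obtain ⟨b, rfl⟩ := hb
  rw [mul_mul_mul_comm, ← pow_add]
  simp only [coeff_X_pow_mul', le_refl, if_true, Nat.sub_self, coeff_zero_eq_constantCoeff, map_mul]

theorem X_pow_dvd_coeff_of_mem_reesAlgebra {q : Polynomial B⟦X⟧}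
    (hq : q ∈ reesAlgebra (Ideal.span {X})) (i : ℕ) : X ^ i ∣ q.coeff i := by
  simpa only [Ideal.span_singleton_pow, Ideal.mem_span_singleton] using hq i

def diagonalHom : reesAlgebra (Ideal.span {X} : Ideal B⟦X⟧) →+* Polynomial B where
  toFun q := diagonal q
  map_one' := by ext i; rcases i with _ | i <;> simp [Polynomial.coeff_one]
  map_mul' q r := by
    ext k
    simp only [Subalgebra.coe_mul, coeff_diagonal, Polynomial.coeff_mul, map_sum]
    refine Finset.sum_congr rfl fun ij hij => ?_
    rw [← Finset.HasAntidiagonal.mem_antidiagonal.1 hij]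
    exact coeff_add_mul_of_X_pow_dvd (X_pow_dvd_coeff_of_mem_reesAlgebra q.2 _)
      (X_pow_dvd_coeff_of_mem_reesAlgebra r.2 _)
  map_zero' := by ext; simp
  map_add' q r := by ext; simp

end PowerSeries

section Augmentation

variable {V}

theorem aug_single (v : V) (c : ℚ) : aug V (AddMonoidAlgebra.single v c) = c := by
  simp [aug]

theorem single_sub_one_mem_augI (v : V) : AddMonoidAlgebra.single v 1 - 1 ∈ augI V := by
  rw [augI, RingHom.mem_ker, map_sub, map_one, aug_single, sub_self]

theorem sub_algebraMap_aug_mem_augI (a : AddMonoidAlgebra ℚ V) :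
    a - algebraMap ℚ _ (aug V a) ∈ augI V := by
  rw [augI, RingHom.mem_ker, map_sub, AlgHom.commutes, Algebra.algebraMap_self, RingHom.id_apply,
    sub_self]

end Augmentation

section ExpCharacter

open PowerSeries

variable {V} {S : Type*} [CommRing S] [Algebra ℚ S]

def expMonoidHom (χ : V →+ S) : Multiplicative V →* S⟦X⟧ where
  toFun v := rescale (χ v.toAdd) (exp S)
  map_one' := by simp
  map_mul' v w := by rw [toAdd_mul, map_add, exp_mul_exp_eq_exp_add]

def expAlgHom (χ : V →+ S) : AddMonoidAlgebra ℚ V →ₐ[ℚ] S⟦X⟧ :=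
  AddMonoidAlgebra.lift ℚ S⟦X⟧ V (expMonoidHom χ)

theorem expAlgHom_single (χ : V →+ S) (v : V) :
    expAlgHom χ (AddMonoidAlgebra.single v 1) = rescale (χ v) (exp S) := by
  rw [expAlgHom, AddMonoidAlgebra.lift_single, one_smul]
  rfl

theorem constantCoeff_expAlgHom (χ : V →+ S) (f : AddMonoidAlgebra ℚ V) :
    constantCoeff (expAlgHom χ f) = algebraMap ℚ S (aug V f) := by
  suffices h : (constantCoeff (R := S)).toRatAlgHom.comp (expAlgHom χ) =
      (Algebra.ofId ℚ S).comp (aug V) from AlgHom.congr_fun h f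
  ext v
  simp [expAlgHom_single, aug_single, ← coeff_zero_eq_constantCoeff_apply, coeff_rescale]

theorem coeff_one_expAlgHom_single (χ : V →+ S) (v : V) :
    coeff 1 (expAlgHom χ (AddMonoidAlgebra.single v 1)) = χ v := by
  simp [expAlgHom_single, coeff_rescale]

theorem map_augI_le_span_X (χ : V →+ S) :
    (augI V).map (expAlgHom χ) ≤ Ideal.span {X} := by
  refine Ideal.map_le_iff_le_comap.2 fun f hf => ?_
  rw [Ideal.mem_comap, Ideal.mem_span_singleton, X_dvd_iff, constantCoeff_expAlgHom,
    show aug V f = 0 from hf, map_zero]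

end ExpCharacter

def symRelQuotEquiv : RingQuot (symRel V) ≃ₐ[ℚ] SymmetricAlgebra ℚ (MQ V) :=
  AlgEquiv.ofAlgHom
    (RingQuot.liftAlgHom ℚ ⟨SymmetricAlgebra.algHom ℚ (MQ V), by
      rintro _ _ ⟨x, y⟩
      rw [map_mul, map_mul, mul_comm]⟩)
    (RingCon.liftₐ _ (RingQuot.mkAlgHom ℚ (symRel V)) <| by
      change ringConGen _ ≤ _
      refine RingCon.ringConGen_le.2 ?_
      rintro _ _ ⟨x, y⟩
      exact (RingCon.ker_apply _).2 (RingQuot.mkAlgHom_rel ℚ (symRel.comm x y)))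
    (SymmetricAlgebra.algHom_ext <| by ext; simp [SymmetricAlgebra.ι])
    (RingQuot.ringQuot_ext' _ _ _ <| TensorAlgebra.hom_ext <| by ext; simp)

namespace GrAlg

variable {V}

theorem monomial_one_mem {a : AddMonoidAlgebra ℚ V} (ha : a ∈ augI V) :
    Polynomial.monomial 1 a ∈ reesAlgebra (augI V) :=
  reesAlgebra.monomial_mem.2 (by rwa [pow_one])

variable (V) in
def mkₐ : reesAlgebra (augI V) →ₐ[ℚ] GrAlg V := Ideal.Quotient.mkₐ ℚ _

variable (V) in
/-- Defined on all of `ℚ[V]` by first projecting onto `I` along the constants; on `I` it is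
`a ↦ [a t]`. -/
def degOne : AddMonoidAlgebra ℚ V →ₗ[ℚ] GrAlg V where
  toFun a := mkₐ V ⟨_, monomial_one_mem (sub_algebraMap_aug_mem_augI a)⟩
  map_add' a b := by
    rw [← map_add]
    congr 1
    ext1
    change Polynomial.monomial 1 _ = Polynomial.monomial 1 _ + Polynomial.monomial 1 _
    rw [← map_add, map_add, map_add]
    congr 1
    abel
  map_smul' c a := by
    rw [RingHom.id_apply, ← map_smul]
    congr 1
    ext1
    change Polynomial.monomial 1 _ = c • Polynomial.monomial 1 _
    rw [Polynomial.smul_monomial, map_smul, smul_eq_mul, map_mul, smul_sub,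
      Algebra.smul_def c (algebraMap ℚ _ _)]

instance : IsScalarTower ℤ ℚ (GrAlg V) := by unfold GrAlg; infer_instance

theorem mkₐ_algebraMap (a : AddMonoidAlgebra ℚ V) :
    mkₐ V (algebraMap _ _ a) = algebraMap ℚ (GrAlg V) (aug V a) := by
  have hJ : mkₐ V (algebraMap _ (reesAlgebra (augI V)) (a - algebraMap ℚ _ (aug V a))) = 0 :=
    Ideal.Quotient.eq_zero_iff_mem.2 <| Ideal.subset_span ⟨_, sub_algebraMap_aug_mem_augI a, rfl⟩
  rwa [map_sub, map_sub, ← IsScalarTower.algebraMap_apply, AlgHom.commutes, sub_eq_zero] at hJ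

theorem mkₐ_monomial_one {a : AddMonoidAlgebra ℚ V} (ha : a ∈ augI V) :
    mkₐ V ⟨_, monomial_one_mem ha⟩ = degOne V a := by
  simp only [degOne, LinearMap.coe_mk, AddHom.coe_mk, show aug V a = 0 from ha, map_zero, sub_zero]

theorem degOne_algebraMap (c : ℚ) : degOne V (algebraMap ℚ _ c) = 0 := by
  simp only [degOne, LinearMap.coe_mk, AddHom.coe_mk, AlgHom.commutes, Algebra.algebraMap_self,
    RingHom.id_apply, sub_self, map_zero]
  exact map_zero (mkₐ V)

theorem degOne_mul_eq_zero {a b : AddMonoidAlgebra ℚ V} (ha : a ∈ augI V) (hb : b ∈ augI V) :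
    degOne V (a * b) = 0 := by
  have : (⟨_, monomial_one_mem (Ideal.mul_mem_left _ a hb)⟩ : reesAlgebra (augI V)) =
      algebraMap _ _ a * ⟨_, monomial_one_mem hb⟩ :=
    Subtype.ext (Polynomial.C_mul_monomial ..).symm
  rw [← mkₐ_monomial_one (Ideal.mul_mem_left _ a hb), this, map_mul, mkₐ_algebraMap,
    show aug V a = 0 from ha, map_zero, zero_mul]

theorem degOne_single_add (v w : V) :
    degOne V (AddMonoidAlgebra.single (v + w) 1) =
      degOne V (AddMonoidAlgebra.single v 1) + degOne V (AddMonoidAlgebra.single w 1) := by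
  have hvw : AddMonoidAlgebra.single (v + w) (1 : ℚ) =
      (AddMonoidAlgebra.single v 1 - 1) * (AddMonoidAlgebra.single w 1 - 1) +
        AddMonoidAlgebra.single v 1 + AddMonoidAlgebra.single w 1 - algebraMap ℚ _ 1 := by
    rw [map_one, ← one_mul (1 : ℚ), ← AddMonoidAlgebra.single_mul_single, one_mul]
    ring
  rw [hvw, map_sub, map_add, map_add, degOne_mul_eq_zero (single_sub_one_mem_augI v)
    (single_sub_one_mem_augI w), degOne_algebraMap, zero_add, sub_zero]

variable (V) in
def degOneAddHom : V →+ GrAlg V where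
  toFun v := degOne V (AddMonoidAlgebra.single v 1)
  map_zero' := degOne_algebraMap 1
  map_add' := degOne_single_add

variable (V) in
def ofSymmetricAlgebra : SymmetricAlgebra ℚ (MQ V) →ₐ[ℚ] GrAlg V :=
  SymmetricAlgebra.lift (LinearMap.liftBaseChange ℚ (degOneAddHom V).toIntLinearMap)

theorem ofSymmetricAlgebra_ι (v : V) :
    ofSymmetricAlgebra V (SymmetricAlgebra.ι ℚ (MQ V) (1 ⊗ₜ v)) =
      degOne V (AddMonoidAlgebra.single v 1) := by
  rw [ofSymmetricAlgebra, SymmetricAlgebra.lift_ι_apply]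
  exact (LinearMap.liftBaseChange_tmul ..).trans (one_smul ℚ _)

theorem degOne_mem_range (a : AddMonoidAlgebra ℚ V) :
    degOne V a ∈ (ofSymmetricAlgebra V).range := by
  induction a using AddMonoidAlgebra.induction_on with
  | of v => exact ⟨_, ofSymmetricAlgebra_ι v⟩
  | add a b ha hb => rw [map_add]; exact add_mem ha hb
  | smul c a ha => rw [map_smul]; exact Subalgebra.smul_mem _ ha c

theorem mkₐ_mem_range (p : reesAlgebra (augI V)) : mkₐ V p ∈ (ofSymmetricAlgebra V).range := by
  obtain ⟨p, hp⟩ := p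
  have hp' := hp
  rw [← adjoin_monomial_eq_reesAlgebra] at hp'
  revert hp
  induction hp' using Algebra.adjoin_induction with
  | mem x hx =>
    obtain ⟨a, ha, rfl⟩ := hx
    exact fun _ => mkₐ_monomial_one ha ▸ degOne_mem_range a
  | algebraMap a =>
    exact fun _ => (mkₐ_algebraMap a).symm ▸ Subalgebra.algebraMap_mem _ _
  | add x y hx hy ihx ihy =>
    rw [adjoin_monomial_eq_reesAlgebra] at hx hy
    exact fun _ => (map_add (mkₐ V) ⟨x, hx⟩ ⟨y, hy⟩).symm ▸ add_mem (ihx hx) (ihy hy)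
  | mul x y hx hy ihx ihy =>
    rw [adjoin_monomial_eq_reesAlgebra] at hx hy
    exact fun _ => (map_mul (mkₐ V) ⟨x, hx⟩ ⟨y, hy⟩).symm ▸ mul_mem (ihx hx) (ihy hy)

theorem ofSymmetricAlgebra_surjective : Function.Surjective (ofSymmetricAlgebra V) := by
  intro x
  obtain ⟨p, rfl⟩ := Ideal.Quotient.mkₐ_surjective ℚ _ x
  exact mkₐ_mem_range p

section Symbol

open PowerSeries

variable {S : Type*} [CommRing S] [Algebra ℚ S]

def symbol (χ : V →+ S) : reesAlgebra (augI V) →+* S :=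
  (Polynomial.evalRingHom 1).comp <| diagonalHom.comp <|
    reesAlgebra.map (expAlgHom χ).toRingHom (map_augI_le_span_X χ)

theorem symbol_monomial (χ : V →+ S) {n : ℕ} {a : AddMonoidAlgebra ℚ V}
    (h : Polynomial.monomial n a ∈ reesAlgebra (augI V)) :
    symbol χ ⟨_, h⟩ = coeff n (expAlgHom χ a) := by
  simp [symbol, diagonalHom, diagonal_monomial]

theorem symbol_algebraMap (χ : V →+ S) (a : AddMonoidAlgebra ℚ V) :
    symbol χ (algebraMap _ _ a) = algebraMap ℚ S (aug V a) := by
  have h : algebraMap _ (reesAlgebra (augI V)) a =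
      ⟨Polynomial.monomial 0 a, reesAlgebra.monomial_mem.2 (by simp)⟩ :=
    rfl
  rw [h, symbol_monomial, coeff_zero_eq_constantCoeff_apply, constantCoeff_expAlgHom]

def lift (χ : V →+ S) : GrAlg V →+* S :=
  Ideal.Quotient.lift _ (symbol χ) fun _ hx => Ideal.span_le (I := RingHom.ker (symbol χ)).2 (by
    rintro _ ⟨a, ha, rfl⟩
    rw [SetLike.mem_coe, RingHom.mem_ker, symbol_algebraMap, show aug V a = 0 from ha, map_zero]) hx

theorem lift_degOne (χ : V →+ S) (a : AddMonoidAlgebra ℚ V) :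
    lift χ (degOne V a) = coeff 1 (expAlgHom χ a) := by
  change symbol χ ⟨_, _⟩ = _
  rw [symbol_monomial, map_sub, AlgHom.commutes, map_sub, PowerSeries.algebraMap_apply,
    coeff_C, if_neg one_ne_zero, sub_zero]

end Symbol

variable (V) in
def toSymmetricAlgebra : GrAlg V →ₐ[ℚ] SymmetricAlgebra ℚ (MQ V) :=
  (lift ((SymmetricAlgebra.ι ℚ (MQ V)).toAddMonoidHom.comp
    (TensorProduct.mk ℤ ℚ V 1).toAddMonoidHom)).toRatAlgHom

theorem toSymmetricAlgebra_comp_ofSymmetricAlgebra :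
    (toSymmetricAlgebra V).comp (ofSymmetricAlgebra V) = AlgHom.id ℚ _ := by
  ext v
  simp [ofSymmetricAlgebra_ι, toSymmetricAlgebra, lift_degOne, coeff_one_expAlgHom_single]

variable (V) in
def equivSymmetricAlgebra : GrAlg V ≃ₐ[ℚ] SymmetricAlgebra ℚ (MQ V) :=
  (AlgEquiv.ofBijective (ofSymmetricAlgebra V)
    ⟨Function.LeftInverse.injective (g := toSymmetricAlgebra V)
      (AlgHom.congr_fun toSymmetricAlgebra_comp_ofSymmetricAlgebra),
     ofSymmetricAlgebra_surjective⟩).symm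

end GrAlg

/-- the graded algebra associated to the augmentation-ideal filtration of the
rational group algebra `ℚ[V]` is isomorphic to the symmetric algebra over `ℚ` on `ℚ ⊗ V`. -/
theorem stmt17 : Nonempty ((GrAlg V) ≃ₐ[ℚ] RingQuot (symRel V)) :=
  ⟨(GrAlg.equivSymmetricAlgebra V).trans (symRelQuotEquiv V).symm⟩

end
end

section
/- For any abelian group $V$, prime $p$, and $f : V \to \mathbb{F}_p$ a polynomial function of degree at most $d$ with $p^t > d$, $f$ is invariant under translation by elements of $p^t V$: $f(u + p^t w) = f(u)$ for all $u, w \in V$. -/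
open Finset Function fwdDiff

section aux
variable {V W : Type*} [AddCommGroup V] [AddCommGroup W] {d : ℕ}

/-- splitting the sum over subsets of `Fin (d+1)` according to membership of `0`. -/
lemma split_sum (f : V → W) (v : Fin (d + 1) → V) (x : V) :
    ∑ S : Finset (Fin (d + 1)), (-1 : ℤ) ^ S.card • f (x + ∑ i ∈ S, v i)
      = (∑ A ∈ ((univ : Finset (Fin (d + 1))).erase 0).powerset,
          (-1 : ℤ) ^ A.card • f (x + ∑ i ∈ A, v i))
      - ∑ A ∈ ((univ : Finset (Fin (d + 1))).erase 0).powerset,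
          (-1 : ℤ) ^ A.card • f ((x + v 0) + ∑ i ∈ A, v i) := by
  have h0 : (0 : Fin (d + 1)) ∉ (univ : Finset (Fin (d + 1))).erase 0 := notMem_erase _ _
  calc ∑ S : Finset (Fin (d + 1)), (-1 : ℤ) ^ S.card • f (x + ∑ i ∈ S, v i)
      = ∑ S ∈ (insert (0 : Fin (d+1)) ((univ : Finset (Fin (d + 1))).erase 0)).powerset,
          (-1 : ℤ) ^ S.card • f (x + ∑ i ∈ S, v i) := by
        rw [insert_erase (mem_univ _), powerset_univ]
    _ = _ := by
        rw [Finset.sum_powerset_insert h0]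
        have key : ∀ A ∈ ((univ : Finset (Fin (d + 1))).erase 0).powerset,
            (-1 : ℤ) ^ (insert (0 : Fin (d+1)) A).card • f (x + ∑ i ∈ insert (0 : Fin (d+1)) A, v i)
              = -((-1 : ℤ) ^ A.card • f ((x + v 0) + ∑ i ∈ A, v i)) := by
          intro A hA
          have hA0 : (0 : Fin (d+1)) ∉ A := fun hmem => h0 (mem_powerset.1 hA hmem)
          rw [Finset.card_insert_of_notMem hA0, Finset.sum_insert hA0, pow_succ, mul_smul]
          have : x + (v 0 + ∑ i ∈ A, v i) = (x + v 0) + ∑ i ∈ A, v i := by abel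
          rw [this]
          simp
        rw [Finset.sum_congr rfl key, Finset.sum_neg_distrib, sub_eq_add_neg]

/-- The cross-effect vanishing at base point `0` implies it at every base point. -/
lemma base_change {f : V → W} (hf : IsPolynomialDeg d f) (u : V) (v : Fin (d + 1) → V) :
    ∑ S : Finset (Fin (d + 1)), (-1 : ℤ) ^ S.card • f (u + ∑ i ∈ S, v i) = 0 := by
  have hconst : ∀ x : V,
      ∑ A ∈ ((univ : Finset (Fin (d + 1))).erase 0).powerset,
        (-1 : ℤ) ^ A.card • f (x + ∑ i ∈ A, v i)
      = ∑ A ∈ ((univ : Finset (Fin (d + 1))).erase 0).powerset,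
        (-1 : ℤ) ^ A.card • f (∑ i ∈ A, v i) := by
    intro x
    have hv' : ∀ A ∈ ((univ : Finset (Fin (d + 1))).erase 0).powerset,
        ∑ i ∈ A, Function.update v 0 x i = ∑ i ∈ A, v i := by
      intro A hA
      refine Finset.sum_congr rfl fun i hi => ?_
      have hi0 : i ≠ 0 := by
        intro h
        exact (notMem_erase (0 : Fin (d+1)) univ) (mem_powerset.1 hA (h ▸ hi))
      exact Function.update_of_ne hi0 _ _
    have h1 := split_sum f (Function.update v 0 x) 0
    have h2 := hf (Function.update v 0 x)
    simp only [zero_add, Function.update_self] at h1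
    rw [h2] at h1
    have e1 : ∑ A ∈ ((univ : Finset (Fin (d + 1))).erase 0).powerset,
        (-1 : ℤ) ^ A.card • f (∑ i ∈ A, Function.update v 0 x i)
        = ∑ A ∈ ((univ : Finset (Fin (d + 1))).erase 0).powerset,
          (-1 : ℤ) ^ A.card • f (∑ i ∈ A, v i) :=
      Finset.sum_congr rfl fun A hA => by rw [hv' A hA]
    have e2 : ∑ A ∈ ((univ : Finset (Fin (d + 1))).erase 0).powerset,
        (-1 : ℤ) ^ A.card • f (x + ∑ i ∈ A, Function.update v 0 x i)
        = ∑ A ∈ ((univ : Finset (Fin (d + 1))).erase 0).powerset,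
          (-1 : ℤ) ^ A.card • f (x + ∑ i ∈ A, v i) :=
      Finset.sum_congr rfl fun A hA => by rw [hv' A hA]
    rw [e1, e2] at h1
    exact (sub_eq_zero.mp h1.symm).symm
  rw [split_sum f v u, hconst u, hconst (u + v 0), sub_self]

open fwdDiff in
/-- The `(d+1)`-st iterated forward difference of a polynomial function of degree `≤ d`
vanishes. -/
lemma fwdDiff_iter_vanish {f : V → W} (hf : IsPolynomialDeg d f) (w : V) (u : V) :
    (fwdDiff w)^[d + 1] f u = 0 := by
  rw [fwdDiff_iter_eq_sum_shift]
  have hgroup : ∑ S : Finset (Fin (d + 1)), (-1 : ℤ) ^ S.card • f (u + S.card • w)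
      = ∑ k ∈ range (d + 1 + 1), (d + 1).choose k • ((-1 : ℤ) ^ k • f (u + k • w)) := by
    rw [← Finset.powerset_univ]
    have := Finset.sum_powerset_apply_card
      (f := fun k => (-1 : ℤ) ^ k • f (u + k • w)) (x := (univ : Finset (Fin (d + 1))))
    simpa [Finset.card_univ] using this
  have h0 : ∑ k ∈ range (d + 1 + 1), (d + 1).choose k • ((-1 : ℤ) ^ k • f (u + k • w)) = 0 := by
    rw [← hgroup]
    have := base_change hf u (fun _ => w)
    simpa using this
  calc ∑ k ∈ range (d + 1 + 1), ((-1 : ℤ) ^ (d + 1 - k) * (d + 1).choose k) • f (u + k • w)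
      = (-1 : ℤ) ^ (d + 1) •
          ∑ k ∈ range (d + 1 + 1), (d + 1).choose k • ((-1 : ℤ) ^ k • f (u + k • w)) := by
        rw [Finset.smul_sum]
        refine Finset.sum_congr rfl fun k hk => ?_
        have hk' : k ≤ d + 1 := by
          have := Finset.mem_range.mp hk; omega
        have hpow : (-1 : ℤ) ^ (d + 1) * (-1 : ℤ) ^ k = (-1 : ℤ) ^ (d + 1 - k) := by
          rw [← pow_add, show d + 1 + k = (d + 1 - k) + 2 * k by omega, pow_add, pow_mul,
            neg_one_sq, one_pow, mul_one]
        have hc : ((d + 1).choose k) • ((-1 : ℤ) ^ k • f (u + k • w))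
            = (((d + 1).choose k : ℤ)) • ((-1 : ℤ) ^ k • f (u + k • w)) :=
          (natCast_zsmul _ _).symm
        rw [hc, smul_smul, smul_smul]
        congr 1
        rw [← hpow]; ring
    _ = 0 := by rw [h0, smul_zero]

lemma fwdDiff_iter_zero_fun (w : V) (m : ℕ) :
    (fwdDiff w)^[m] (fun _ => (0 : W)) = fun _ => (0 : W) := by
  induction m with
  | zero => rfl
  | succ n ih => rw [Function.iterate_succ_apply, fwdDiff_const, ih]

end aux

/-- if `f : V → 𝔽p` is polynomial of degree at most `d` and `p^t > d`, then `f`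
is invariant under translation by elements of `p^t V`. -/
theorem stmt18 (p d t : ℕ) [Fact p.Prime] (h : d < p ^ t)
    (V : Type*) [AddCommGroup V] (f : V → ZMod p) (hf : IsPolynomialDeg d f) :
    ∀ u w : V, f (u + p ^ t • w) = f u := by
  intro u w
  have hz : (fwdDiff w)^[d + 1] f = fun _ => (0 : ZMod p) :=
    funext (fwdDiff_iter_vanish hf w)
  rw [shift_eq_sum_fwdDiff_iter w f (p ^ t) u, Finset.sum_eq_single 0]
  · simp
  · intro k hk hk0
    rcases le_or_gt k d with hkd | hkd
    · have hdvd : p ∣ (p ^ t).choose k :=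
        (Fact.out : p.Prime).dvd_choose_pow hk0 (by omega)
      rw [nsmul_eq_mul, (ZMod.natCast_eq_zero_iff _ _).mpr hdvd, zero_mul]
    · rw [show k = (k - (d + 1)) + (d + 1) by omega, Function.iterate_add_apply, hz,
        fwdDiff_iter_zero_fun, smul_zero]
  · intro h0
    exact absurd (Finset.mem_range.mpr (by omega)) h0
end
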